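/- arXiv:1108.2409 — 5 statements merged into one kernel-verified Lean document; each statement's English description precedes it below -/
import Mathlib

section
/- Let V be a vector space over 𝔽₂ of finite positive dimension endowed with a symplectic form B. Let S be a linearly independent subset of V such that S is 𝓘₀-related to a set S' via replacing β ∈ S by τ_α(β) for some α, β ∈ S with B(α,β) = 1. If G(S) is the line graph of a tree, then G(S') is the line graph of a tree. -/
/-!
Let `φ : G(S) ≃ L(T)`. Since `B α β = 1`, the edges `φ α = vu` and `φ β = vw` of `T` share a
vertex `v`, and `τ_α β = α + β`. Replacing `β` by `α + β` corresponds to sliding the edge `vw`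
of `T` along `vu` to `uw`: for `γ ∈ S \ {β}` we have `B γ (α + β) = B γ α + B γ β`, and an edge
of `T` other than `vu` and `vw` meets `uw` iff it meets exactly one of `vu`, `vw`. The slid graph
is again a tree, because `vw` is a bridge of `T` while `u` and `w` are joined through `v`.
Linear independence makes `α + β` a new vector, so that `S'` is in bijection with `S`.
-/

open Module

/-- The transvection with direction `α`, as a linear automorphism of `V`
(over `𝔽₂`, for an alternating form `B` it is an involution). -/
def transvection {V : Type} [AddCommGroup V] [Module (ZMod 2) V]
    (B : LinearMap.BilinForm (ZMod 2) V) (hB : ∀ v, B v v = 0) (α : V) :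
    V ≃ₗ[ZMod 2] V :=
  letI f : V →ₗ[ZMod 2] V :=
    { toFun := fun β => β + B β α • α
      map_add' := fun β γ => by
        simp only [map_add, LinearMap.add_apply, add_smul]
        abel
      map_smul' := fun c β => by
        simp only [map_smul, LinearMap.smul_apply, smul_eq_mul, RingHom.id_apply, smul_add,
          smul_smul] }
  haveI key : ∀ β, f (f β) = β := by
    intro β
    show (β + B β α • α) + B (β + B β α • α) α • α = β
    have h1 : B (β + B β α • α) α = B β α := by
      simp [map_add, hB α, LinearMap.add_apply, LinearMap.smul_apply]
    rw [h1]
    have h2 : B β α • α + B β α • α = (0 : V) := by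
      rw [← add_smul]
      have : B β α + B β α = 0 := by
        have : (2 : ZMod 2) = 0 := by decide
        calc B β α + B β α = 2 * B β α := by ring
        _ = 0 := by rw [this]; ring
      rw [this, zero_smul]
    rw [add_assoc, h2, add_zero]
  LinearEquiv.ofLinear f f (by ext β; exact key β) (by ext β; exact key β)

/-- the subgroup `Tv(S)` generated by the transvections with directions in `S`. -/
def Tv {V : Type} [AddCommGroup V] [Module (ZMod 2) V]
    (B : LinearMap.BilinForm (ZMod 2) V) (hB : ∀ v, B v v = 0) (S : Set V) :
    Subgroup (V ≃ₗ[ZMod 2] V) :=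
  Subgroup.closure ((fun α => transvection B hB α) '' S)

/-- The graph `G(S)`: vertex set `S`, with `α, β` adjacent iff `B α β = 1`. -/
def graphOf {V : Type} [AddCommGroup V] [Module (ZMod 2) V]
    (B : LinearMap.BilinForm (ZMod 2) V) (hB : ∀ v, B v v = 0) (S : Set V) :
    SimpleGraph S where
  Adj a b := B a b = 1
  symm := by
    constructor
    intro a b hab
    have h := hB ((a : V) + b)
    simp only [map_add, LinearMap.add_apply, hB] at h
    -- h : B b a + B a b = 0 (after simp of diagonal terms)
    have h' : B (b : V) a + B (a : V) b = 0 := by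
      simpa [hB] using h
    have : B (b : V) a = B (a : V) b := by
      have := eq_neg_of_add_eq_zero_left h'
      rwa [CharTwo.neg_eq] at this
    rw [this]; exact hab
  loopless := by
    constructor
    intro a h
    rw [hB] at h
    exact zero_ne_one h

/-- number of connected components of a graph. -/
noncomputable def numComponents {α : Type} (G : SimpleGraph α) : ℕ :=
  Nat.card G.ConnectedComponent

/-- A cut-vertex: a vertex whose deletion increases the number of components. -/
noncomputable def IsCutVertex {α : Type} (G : SimpleGraph α) (u : α) : Prop :=
  numComponents G < numComponents (G.induce {v | v ≠ u})

/-- A block: a maximal (vertex set of a) connected induced subgraph having no cut-vertex. -/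
noncomputable def IsBlock {α : Type} (G : SimpleGraph α) (A : Set α) : Prop :=
  ((G.induce A).Connected ∧ ∀ u, ¬ IsCutVertex (G.induce A) u) ∧
    ∀ A' : Set α, A ⊆ A' → ((G.induce A').Connected ∧ ∀ u, ¬ IsCutVertex (G.induce A') u) →
      A' = A

/-- A block graph: a connected graph all of whose blocks are complete. -/
noncomputable def IsBlockGraph {α : Type} (G : SimpleGraph α) : Prop :=
  G.Connected ∧ ∀ A : Set α, IsBlock G A → A.Pairwise G.Adj

/-- Claw-free: no induced subgraph isomorphic to `K_{1,3}`. -/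
def ClawFree {α : Type} (G : SimpleGraph α) : Prop :=
  IsEmpty (completeBipartiteGraph (Fin 1) (Fin 3) ↪g G)

/-- `G` is (isomorphic to) the line graph of a tree. -/
def IsLineGraphOfTree {α : Type} (G : SimpleGraph α) : Prop :=
  ∃ (W : Type) (T : SimpleGraph W), T.IsTree ∧ Nonempty (G ≃g T.lineGraph)

/-- A path graph: a tree in which every vertex has degree at most two. -/
def IsPathGraph {α : Type} (G : SimpleGraph α) : Prop :=
  G.IsTree ∧ ∀ v a b c : α, G.Adj v a → G.Adj v b → G.Adj v c → a = b ∨ a = c ∨ b = c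

/-- The relation `𝓘₀` on linearly independent subsets of `V`. -/
def IRelZero {V : Type} [AddCommGroup V] [Module (ZMod 2) V]
    (B : LinearMap.BilinForm (ZMod 2) V) (hB : ∀ v, B v v = 0) (S S' : Set V) : Prop :=
  LinearIndependent (ZMod 2) ((↑) : S → V) ∧ LinearIndependent (ZMod 2) ((↑) : S' → V) ∧
    ∃ α ∈ S, ∃ β ∈ S, S' = insert (transvection B hB α β) (S \ {β})

/-- The equivalence relation `𝓘` generated by `𝓘₀`. -/
def IRel {V : Type} [AddCommGroup V] [Module (ZMod 2) V]
    (B : LinearMap.BilinForm (ZMod 2) V) (hB : ∀ v, B v v = 0) : Set V → Set V → Prop :=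
  Relation.EqvGen (IRelZero B hB)

open SimpleGraph Function

theorem Set.bijOn_update_insert_diff {α : Type*} [DecidableEq α] {s : Set α} {b c : α}
    (hb : b ∈ s) (hc : c ∉ s \ {b}) : Set.BijOn (update id b c) s (insert c (s \ {b})) := by
  refine ⟨fun x hx => ?_, fun x hx y hy hxy => ?_, ?_⟩
  · by_cases hxb : x = b
    · simp [hxb]
    · simp [hx, hxb]
  · by_cases hxb : x = b <;> by_cases hyb : y = b
    · rw [hxb, hyb]
    · simp only [hxb, update_self, update_of_ne hyb, id] at hxy
      exact absurd ⟨hxy ▸ hy, hxy ▸ hyb⟩ hc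
    · simp only [hyb, update_self, update_of_ne hxb, id] at hxy
      exact absurd ⟨hxy ▸ hx, hxy ▸ hxb⟩ hc
    · simpa [update_of_ne hxb, update_of_ne hyb] using hxy
  · rintro y (rfl | ⟨hy, hyb⟩)
    · exact ⟨b, hb, by simp⟩
    · exact ⟨y, hy, update_of_ne hyb _ _⟩

theorem LinearIndepOn.add_notMem {R M : Type*} [Ring R] [Nontrivial R] [AddCommGroup M]
    [Module R M] {s : Set M} (hs : LinearIndepOn R id s) {a b : M} (ha : a ∈ s) (hb : b ∈ s) :
    a + b ∉ s := by
  intro h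
  by_cases hca : a + b = a
  · exact hs.ne_zero hb (by simpa using hca)
  by_cases hcb : a + b = b
  · exact hs.ne_zero ha (by simpa using hcb)
  refine hs.notMem_span h (Submodule.add_mem _ ?_ ?_) <;>
    refine Submodule.subset_span ⟨_, ⟨?_, ?_⟩, rfl⟩ <;> simp_all [eq_comm]

theorem Sym2.mem_or_mem_iff_xor {W : Type*} {e : Sym2 W} {v u w : W} (hvu : v ≠ u) (hvw : v ≠ w)
    (huw : u ≠ w) (he_vu : e ≠ s(v, u)) (he_vw : e ≠ s(v, w)) (he_uw : e ≠ s(u, w)) :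
    (u ∈ e ∨ w ∈ e) ↔ Xor (v ∈ e ∨ u ∈ e) (v ∈ e ∨ w ∈ e) := by
  have h_vu := (Sym2.mem_and_mem_iff hvu).not.mpr he_vu
  have h_vw := (Sym2.mem_and_mem_iff hvw).not.mpr he_vw
  have h_uw := (Sym2.mem_and_mem_iff huw).not.mpr he_uw
  rw [xor_iff_not_iff]
  tauto

theorem ZMod.add_eq_one_iff_xor (a b : ZMod 2) : a + b = 1 ↔ Xor (a = 1) (b = 1) := by
  rw [xor_iff_not_iff]
  revert a b; decide

namespace SimpleGraph

theorem ext_of_adj_iff_of_ne {X : Type*} {G H : SimpleGraph X} (b : X)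
    (h₁ : ∀ x y, x ≠ b → y ≠ b → (G.Adj x y ↔ H.Adj x y))
    (h₂ : ∀ x, x ≠ b → (G.Adj x b ↔ H.Adj x b)) : G = H := by
  ext x y
  by_cases hx : x = b <;> by_cases hy : y = b
  · simp [hx, hy]
  · rw [hx, G.adj_comm, H.adj_comm]
    exact h₂ y hy
  · rw [hy]
    exact h₂ x hx
  · exact h₁ x y hx hy

theorem Iso.isLineGraphOfTree_iff {X Y : Type} {G : SimpleGraph X} {H : SimpleGraph Y}
    (f : G ≃g H) : IsLineGraphOfTree G ↔ IsLineGraphOfTree H :=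
  ⟨fun ⟨W, T, hT, ⟨φ⟩⟩ => ⟨W, T, hT, ⟨f.symm.trans φ⟩⟩,
    fun ⟨W, T, hT, ⟨φ⟩⟩ => ⟨W, T, hT, ⟨f.trans φ⟩⟩⟩

variable {W : Type*} {T : SimpleGraph W} {v u w : W}

theorem IsAcyclic.not_adj_of_adj_of_adj (hT : T.IsAcyclic) (hvu : T.Adj v u) (hvw : T.Adj v w) :
    ¬T.Adj u w := by
  classical
  intro huw
  exact hT.cliqueFree le_rfl {v, u, w} (is3Clique_triple_iff.mpr ⟨hvu, hvw, huw⟩)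

def slideEdge (T : SimpleGraph W) (v u w : W) : SimpleGraph W :=
  T.deleteEdges {s(v, w)} ⊔ edge u w

theorem slideEdge_eq_deleteEdges (hvu : v ≠ u) :
    T.slideEdge v u w = (T ⊔ edge u w).deleteEdges {s(v, w)} := by
  rw [slideEdge, deleteEdges_sup, (deleteEdges_eq_self (G := edge u w)).mpr]
  simp +contextual [edgeSet_edge, hvu]

theorem IsTree.slideEdge (hT : T.IsTree) (hvu : T.Adj v u) (hvw : T.Adj v w) (huw : u ≠ w) :
    (T.slideEdge v u w).IsTree := by
  have hreach_vu : (T.deleteEdges {s(v, w)}).Reachable v u :=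
    Adj.reachable ((deleteEdges_adj ..).mpr ⟨hvu, by simp [huw, hvw.ne]⟩)
  have hreach_uw : (T.slideEdge v u w).Reachable u w :=
    Adj.reachable (Or.inr ((edge_adj ..).mpr ⟨Or.inl ⟨rfl, rfl⟩, huw⟩))
  have hbridge : T.IsBridge s(v, w) := isAcyclic_iff_forall_adj_isBridge.mp hT.isAcyclic hvw
  constructor
  · rw [slideEdge_eq_deleteEdges hvu.ne]
    refine (hT.connected.mono le_sup_left).connected_delete_edge_of_not_isBridge ?_
    rw [isBridge_iff, not_not, ← slideEdge_eq_deleteEdges hvu.ne]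
    exact (hreach_vu.mono le_sup_left).trans hreach_uw
  · exact (hT.isAcyclic.anti (deleteEdges_le _)).sup_edge_of_not_reachable
      fun h => hbridge (hreach_vu.trans h)

theorem edgeSet_slideEdge (huw : u ≠ w) :
    (T.slideEdge v u w).edgeSet = insert s(u, w) (T.edgeSet \ {s(v, w)}) := by
  rw [slideEdge, edgeSet_sup, edgeSet_deleteEdges, edgeSet_edge_of_ne huw, Set.union_singleton]

section

variable [DecidableEq W]

theorem bijOn_update_slideEdge (hvw : T.Adj v w) (huw : u ≠ w) (hnuw : ¬T.Adj u w) :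
    Set.BijOn (update id s(v, w) s(u, w)) T.edgeSet (T.slideEdge v u w).edgeSet := by
  rw [edgeSet_slideEdge huw]
  exact Set.bijOn_update_insert_diff hvw fun h => hnuw h.1

noncomputable def slideEdgeEquiv (hvw : T.Adj v w) (huw : u ≠ w) (hnuw : ¬T.Adj u w) :
    T.edgeSet ≃ (T.slideEdge v u w).edgeSet :=
  (bijOn_update_slideEdge hvw huw hnuw).equiv _

@[simp]
theorem coe_slideEdgeEquiv (hvw : T.Adj v w) (huw : u ≠ w) (hnuw : ¬T.Adj u w) (e : T.edgeSet) :
    (slideEdgeEquiv hvw huw hnuw e : Sym2 W) = update id s(v, w) s(u, w) (e : Sym2 W) :=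
  rfl

theorem lineGraph_slideEdge_adj_of_ne (hvw : T.Adj v w) (huw : u ≠ w) (hnuw : ¬T.Adj u w)
    {e f : T.edgeSet} (he : (e : Sym2 W) ≠ s(v, w)) (hf : (f : Sym2 W) ≠ s(v, w)) :
    (T.slideEdge v u w).lineGraph.Adj (slideEdgeEquiv hvw huw hnuw e)
      (slideEdgeEquiv hvw huw hnuw f) ↔ T.lineGraph.Adj e f := by
  simp [lineGraph_adj_iff_exists, update_of_ne he, update_of_ne hf, Subtype.ext_iff]

theorem lineGraph_slideEdge_adj_slid_edge (hvu : T.Adj v u) (hvw : T.Adj v w) (huw : u ≠ w)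
    (hnuw : ¬T.Adj u w) {e : T.edgeSet} (he : (e : Sym2 W) ≠ s(v, w)) :
    (T.slideEdge v u w).lineGraph.Adj (slideEdgeEquiv hvw huw hnuw e)
      (slideEdgeEquiv hvw huw hnuw ⟨s(v, w), hvw⟩) ↔
      Xor (T.lineGraph.Adj e ⟨s(v, u), hvu⟩) (T.lineGraph.Adj e ⟨s(v, w), hvw⟩) := by
  have he_uw : (e : Sym2 W) ≠ s(u, w) := fun h => hnuw (by simpa [h] using e.2)
  simp only [lineGraph_adj_iff_exists, (slideEdgeEquiv hvw huw hnuw).injective.ne_iff, ne_eq,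
    Subtype.ext_iff, coe_slideEdgeEquiv, update_of_ne he, update_self, id, he,
    not_false_eq_true, true_and, Sym2.mem_iff, and_or_left, exists_or, exists_eq_right]
  by_cases he_vu : (e : Sym2 W) = s(v, u)
  · simp [he_vu, hvu.ne]
  · simpa [he_vu] using Sym2.mem_or_mem_iff_xor hvu.ne hvw.ne huw he_vu he he_uw

end

end SimpleGraph



theorem IsLineGraphOfTree.of_adj_xor {X : Type} {G G' : SimpleGraph X} (hG : IsLineGraphOfTree G)
    {a b : X} (hab : G.Adj a b) (h₁ : ∀ x y, x ≠ b → y ≠ b → (G'.Adj x y ↔ G.Adj x y))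
    (h₂ : ∀ x, x ≠ b → (G'.Adj x b ↔ Xor (G.Adj x a) (G.Adj x b))) :
    IsLineGraphOfTree G' := by
  classical
  obtain ⟨W, T, hT, ⟨φ⟩⟩ := hG
  obtain ⟨-, v, hva, hvb⟩ := lineGraph_adj_iff_exists.mp (φ.map_adj_iff.mpr hab)
  obtain ⟨u, hu⟩ := Sym2.mem_iff_exists.mp hva
  obtain ⟨w, hw⟩ := Sym2.mem_iff_exists.mp hvb
  have hvu : T.Adj v u := by rw [← mem_edgeSet, ← hu]; exact (φ a).2
  have hvw : T.Adj v w := by rw [← mem_edgeSet, ← hw]; exact (φ b).2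
  have huw : u ≠ w := by
    rintro rfl
    exact hab.ne (φ.injective (Subtype.ext (hu.trans hw.symm)))
  have hnuw := hT.isAcyclic.not_adj_of_adj_of_adj hvu hvw
  have hφa : φ a = ⟨s(v, u), hvu⟩ := Subtype.ext hu
  have hφb : φ b = ⟨s(v, w), hvw⟩ := Subtype.ext hw
  have hφ_ne : ∀ x, x ≠ b → (φ x : Sym2 W) ≠ s(v, w) := fun x hx h =>
    hx (φ.injective (Subtype.ext (h.trans hw.symm)))
  let F := φ.toEquiv.trans (slideEdgeEquiv hvw huw hnuw)
  have hG' : G' = (T.slideEdge v u w).lineGraph.comap F := by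
    refine ext_of_adj_iff_of_ne b (fun x y hx hy => ?_) (fun x hx => ?_)
    · rw [h₁ x y hx hy, comap_adj, ← φ.map_adj_iff]
      exact (lineGraph_slideEdge_adj_of_ne hvw huw hnuw (hφ_ne x hx) (hφ_ne y hy)).symm
    · rw [h₂ x hx, comap_adj, ← φ.map_adj_iff, ← φ.map_adj_iff, hφa, hφb,
        show F b = _ from congrArg (slideEdgeEquiv hvw huw hnuw) hφb]
      exact (lineGraph_slideEdge_adj_slid_edge hvu hvw huw hnuw (hφ_ne x hx)).symm
  exact ⟨W, _, hT.slideEdge hvu hvw huw, ⟨hG' ▸ Iso.comap F _⟩⟩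

theorem stmt5_general {V : Type} [AddCommGroup V] [Module (ZMod 2) V]
    (B : LinearMap.BilinForm (ZMod 2) V) (hB : ∀ v, B v v = 0)
    (S : Set V) (hS : LinearIndependent (ZMod 2) ((↑) : S → V))
    (α β : V) (hα : α ∈ S) (hβ : β ∈ S) (hαβ : B α β = 1)
    (S' : Set V) (hS' : S' = insert (transvection B hB α β) (S \ {β}))
    (h : IsLineGraphOfTree (graphOf B hB S)) :
    IsLineGraphOfTree (graphOf B hB S') := by
  classical
  have hβα : B β α = 1 := (show (graphOf B hB S).Adj ⟨α, hα⟩ ⟨β, hβ⟩ from hαβ).symm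
  have hτ : transvection B hB α β = β + α := by
    change β + B β α • α = β + α
    rw [hβα, one_smul]
  rw [hτ] at hS'
  subst hS'
  let e := (Set.bijOn_update_insert_diff hβ fun h => LinearIndepOn.add_notMem hS hβ hα h.1).equiv
  have he_ne : ∀ x : S, x ≠ ⟨β, hβ⟩ → (e x : V) = x := fun x hx =>
    update_of_ne (fun h => hx (Subtype.ext h)) _ _
  have he_β : (e ⟨β, hβ⟩ : V) = β + α := update_self (f := id) ..
  refine (Iso.comap e _).isLineGraphOfTree_iff.mp
    (h.of_adj_xor (a := ⟨α, hα⟩) (b := ⟨β, hβ⟩) hαβ ?_ ?_)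
  · intro x y hx hy
    change B (e x) (e y) = 1 ↔ B x y = 1
    rw [he_ne x hx, he_ne y hy]
  · intro x hx
    change B (e x) (e ⟨β, hβ⟩) = 1 ↔ Xor (B x α = 1) (B x β = 1)
    rw [he_ne x hx, he_β, map_add, add_comm, ZMod.add_eq_one_iff_xor]

/-- If `S` is linearly independent, `α, β ∈ S` with `B α β = 1`, and `S'` is
obtained from `S` by replacing `β` with `τ_α β`, then `G(S)` being the line graph of a tree
implies `G(S')` is the line graph of a tree. -/
theorem stmt5 {V : Type} [AddCommGroup V] [Module (ZMod 2) V] [FiniteDimensional (ZMod 2) V]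
    (hdim : 0 < Module.finrank (ZMod 2) V)
    (B : LinearMap.BilinForm (ZMod 2) V) (hB : ∀ v, B v v = 0)
    (S : Set V) (hS : LinearIndependent (ZMod 2) ((↑) : S → V))
    (α β : V) (hα : α ∈ S) (hβ : β ∈ S) (hαβ : B α β = 1)
    (S' : Set V) (hS' : S' = insert (transvection B hB α β) (S \ {β}))
    (h : IsLineGraphOfTree (graphOf B hB S)) :
    IsLineGraphOfTree (graphOf B hB S') :=
  stmt5_general B hB S hS α β hα hβ hαβ S' hS' h
end

section
/- Let n ≥ 3, let V = 𝔽₂ⁿ with standard basis α₁,…,αₙ, and let B be the symplectic form on V determined by B(αᵢ,αⱼ) = 1 if |i−j| = 1 and B(αᵢ,αⱼ) = 0 otherwise. Let S = {α₁,…,αₙ} ∪ {α₁+α₂}. Then S spans V, the group Tv(S) is isomorphic to a symmetric group, but the graph G(S) is not a block graph. (In particular, the claim that for a spanning set S, Tv(S) being isomorphic to a symmetric group implies G(S) is a claw-free block graph, is false.) -/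
open Module

/-!
Sending `αᵢ` to `eᵢ + eᵢ₊₁` identifies `V` with the even-weight subspace of `𝔽₂^{n+1}` and `B`
with the dot product (the mod 2 root lattice of type `A_n`). A vector sent to `e_a + e_b` then
acts by the transvection that swaps the coordinates `a` and `b`; as `α₁ + α₂ ↦ e₁ + e₃`, `Tv(S)` is
the image of `Sym(n+1)`, which acts faithfully on the even-weight subspace because `n + 1 ≥ 3`.
On the other hand `α₂` and `α₁ + α₂` are adjacent common neighbours of the non-adjacent `α₁` and
`α₃`: the four vertices form a `2`-connected, non-complete subgraph, which no block graph has.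
-/

section PermAction

variable (R : Type*) [CommSemiring R] {ι : Type*}

def permAct : Equiv.Perm ι →* Module.End R (ι → R) where
  toFun σ := LinearMap.funLeft R R ⇑σ⁻¹
  map_one' := rfl
  map_mul' _ _ := rfl

variable {R}

@[simp]
lemma permAct_apply (σ : Equiv.Perm ι) (w : ι → R) (j : ι) : permAct R σ w j = w (σ⁻¹ j) := rfl

lemma sum_permAct [Fintype ι] (σ : Equiv.Perm ι) (w : ι → R) :
    ∑ j, permAct R σ w j = ∑ j, w j :=
  Equiv.sum_comp σ⁻¹ w

lemma permAct_single [DecidableEq ι] (σ : Equiv.Perm ι) (i : ι) (r : R) :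
    permAct R σ (Pi.single i r) = Pi.single (σ i) r := by
  ext j
  simp [Pi.single_apply, Equiv.symm_apply_eq]

lemma eq_one_of_forall_permAct_single_add_single [Nontrivial R] [DecidableEq ι] [Fintype ι]
    (hι : 3 ≤ Fintype.card ι) {σ : Equiv.Perm ι}
    (h : ∀ a b, permAct R σ (Pi.single a 1 + Pi.single b 1) = Pi.single a 1 + Pi.single b 1) :
    σ = 1 := by
  ext a
  rw [Equiv.Perm.one_apply]
  by_contra hσa
  obtain ⟨b, -, hb⟩ := Finset.exists_mem_notMem_of_card_lt_card (s := {a, σ a})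
    (t := Finset.univ) (Finset.card_le_two.trans_lt (by rw [Finset.card_univ]; omega))
  simp only [Finset.mem_insert, Finset.mem_singleton, not_or] at hb
  have := congrFun (h a b) (σ a)
  simp [hσa, Ne.symm hb.1, Ne.symm hb.2] at this

lemma permAct_swap [DecidableEq ι] (a b : ι) (w : ι → ZMod 2) :
    permAct (ZMod 2) (Equiv.swap a b) w = w + (w a + w b) • (Pi.single a 1 + Pi.single b 1) := by
  ext j
  simp only [permAct_apply, Equiv.swap_inv, Equiv.swap_apply_def, Pi.add_apply, Pi.smul_apply,
    Pi.single_apply, smul_eq_mul]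
  split_ifs <;> subst_vars <;> ring_nf <;> reduce_mod_char

end PermAction

section TypeA

variable {n : ℕ}

variable (n) in
def diffMap : (Fin n → ZMod 2) →ₗ[ZMod 2] (Fin (n + 1) → ZMod 2) :=
  Fintype.linearCombination (ZMod 2) fun i => Pi.single i.castSucc 1 + Pi.single i.succ 1

variable (n) in
def partialSum : (Fin (n + 1) → ZMod 2) →ₗ[ZMod 2] (Fin n → ZMod 2) :=
  LinearMap.pi fun i => ∑ j ∈ Finset.Iic i.castSucc, LinearMap.proj j

lemma diffMap_single (i : Fin n) :
    diffMap n (Pi.single i 1) = Pi.single i.castSucc 1 + Pi.single i.succ 1 := by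
  simp [diffMap]

lemma diffMap_single_add_single_of_succ_eq {i j : Fin n} (hij : i.succ = j.castSucc) :
    diffMap n (Pi.single i 1 + Pi.single j 1) = Pi.single i.castSucc 1 + Pi.single j.succ 1 := by
  rw [map_add, diffMap_single, diffMap_single, hij]
  ext k
  simp only [Pi.add_apply]
  ring_nf
  reduce_mod_char

lemma partialSum_comp_diffMap : partialSum n ∘ₗ diffMap n = LinearMap.id := by
  refine (Pi.basisFun (ZMod 2) (Fin n)).ext fun i => funext fun k => ?_
  simp only [Pi.basisFun_apply, LinearMap.comp_apply, diffMap_single, partialSum,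
    LinearMap.pi_apply, LinearMap.sum_apply, LinearMap.proj_apply, Pi.add_apply,
    Finset.sum_add_distrib, Finset.sum_pi_single', LinearMap.id_coe, id_eq]
  simp only [Finset.mem_Iic, Pi.single_apply, Fin.le_def, Fin.val_castSucc, Fin.val_succ,
    Fin.ext_iff]
  split_ifs <;> first | omega | decide

lemma partialSum_diffMap (x : Fin n → ZMod 2) : partialSum n (diffMap n x) = x :=
  LinearMap.congr_fun partialSum_comp_diffMap x

lemma diffMap_injective : Function.Injective (diffMap n) :=
  Function.LeftInverse.injective partialSum_diffMap

lemma mem_range_diffMap_iff {w : Fin (n + 1) → ZMod 2} :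
    w ∈ LinearMap.range (diffMap n) ↔ ∑ j, w j = 0 := by
  let s : (Fin (n + 1) → ZMod 2) →ₗ[ZMod 2] ZMod 2 := ∑ j, LinearMap.proj j
  have hs (w : Fin (n + 1) → ZMod 2) : s w = ∑ j, w j := by simp [s]
  suffices LinearMap.range (diffMap n) = LinearMap.ker s by rw [this, LinearMap.mem_ker, hs]
  apply Submodule.eq_of_le_of_finrank_le
  · rw [LinearMap.range_le_ker_iff]
    ext i
    simp only [LinearMap.coe_comp, LinearMap.coe_single, Function.comp_apply, diffMap_single, hs,
      Pi.add_apply, Finset.sum_add_distrib, Finset.sum_pi_single', Finset.mem_univ, ↓reduceIte,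
      LinearMap.zero_comp, LinearMap.zero_apply]
    decide
  · have hker : LinearMap.ker s ≠ ⊤ := fun h => by
      simpa [hs] using LinearMap.congr_fun (LinearMap.ker_eq_top.mp h) (Pi.single 0 1)
    have := Submodule.finrank_lt hker
    rw [LinearMap.finrank_range_of_inj diffMap_injective]
    simp only [Module.finrank_fin_fun] at this ⊢
    omega

lemma diffMap_partialSum {w : Fin (n + 1) → ZMod 2} (hw : w ∈ LinearMap.range (diffMap n)) :
    diffMap n (partialSum n w) = w := by
  obtain ⟨x, rfl⟩ := hw
  rw [partialSum_diffMap]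

lemma permAct_diffMap_mem_range (σ : Equiv.Perm (Fin (n + 1))) (x : Fin n → ZMod 2) :
    permAct (ZMod 2) σ (diffMap n x) ∈ LinearMap.range (diffMap n) := by
  rw [mem_range_diffMap_iff, sum_permAct, ← mem_range_diffMap_iff]
  exact LinearMap.mem_range_self _ x

variable (n) in
def typeAEnd : Equiv.Perm (Fin (n + 1)) →* Module.End (ZMod 2) (Fin n → ZMod 2) where
  toFun σ := partialSum n ∘ₗ permAct (ZMod 2) σ ∘ₗ diffMap n
  map_one' := by
    rw [map_one, Module.End.one_eq_id, LinearMap.id_comp, partialSum_comp_diffMap]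
    rfl
  map_mul' σ τ := LinearMap.ext fun x => by
    simp only [LinearMap.comp_apply, Module.End.mul_apply,
      diffMap_partialSum (permAct_diffMap_mem_range τ x), map_mul]

variable (n) in
def typeARep : Equiv.Perm (Fin (n + 1)) →* ((Fin n → ZMod 2) ≃ₗ[ZMod 2] (Fin n → ZMod 2)) :=
  (LinearMap.GeneralLinearGroup.generalLinearEquiv _ _).toMonoidHom.comp (typeAEnd n).toHomUnits

lemma diffMap_typeARep (σ : Equiv.Perm (Fin (n + 1))) (x : Fin n → ZMod 2) :
    diffMap n (typeARep n σ x) = permAct (ZMod 2) σ (diffMap n x) :=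
  diffMap_partialSum (permAct_diffMap_mem_range σ x)

lemma typeARep_injective (hn : 2 ≤ n) : Function.Injective (typeARep n) := by
  refine (injective_iff_map_eq_one _).2 fun σ hσ => ?_
  refine eq_one_of_forall_permAct_single_add_single (R := ZMod 2)
    (by rw [Fintype.card_fin]; omega) fun a b => ?_
  obtain ⟨x, hx⟩ : Pi.single a 1 + Pi.single b 1 ∈ LinearMap.range (diffMap n) := by
    rw [mem_range_diffMap_iff]
    simp only [Pi.add_apply, Finset.sum_add_distrib, Finset.sum_pi_single', Finset.mem_univ,
      ↓reduceIte]
    decide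
  rw [← hx, ← diffMap_typeARep, hσ]
  rfl

end TypeA

section Transvections

variable {n : ℕ} {B : LinearMap.BilinForm (ZMod 2) (Fin n → ZMod 2)}

lemma bilinForm_eq_dotProduct_diffMap
    (hBval : ∀ i j : Fin n, B (Pi.single i 1) (Pi.single j 1) =
      if (i : ℕ) + 1 = (j : ℕ) ∨ (j : ℕ) + 1 = (i : ℕ) then 1 else 0)
    (x y : Fin n → ZMod 2) : B x y = diffMap n x ⬝ᵥ diffMap n y := by
  suffices B = (dotProductBilin (ZMod 2) (ZMod 2)).compl₁₂ (diffMap n) (diffMap n) by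
    rw [this]; rfl
  refine LinearMap.BilinForm.ext_basis (Pi.basisFun (ZMod 2) (Fin n)) fun i j => ?_
  simp only [Pi.basisFun_apply, hBval, LinearMap.compl₁₂_apply, diffMap_single,
    dotProductBilin_apply_apply, dotProduct_add, dotProduct_single,
    Pi.add_apply, Pi.single_apply, Fin.ext_iff, Fin.val_castSucc, Fin.val_succ]
  split_ifs <;> first | omega | decide

lemma typeARep_swap (hB : ∀ v, B v v = 0)
    (hBD : ∀ x y, B x y = diffMap n x ⬝ᵥ diffMap n y) {a b : Fin (n + 1)} {α : Fin n → ZMod 2}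
    (hα : diffMap n α = Pi.single a 1 + Pi.single b 1) :
    typeARep n (Equiv.swap a b) = transvection B hB α := by
  ext x : 1
  apply diffMap_injective
  change _ = diffMap n (x + B x α • α)
  rw [diffMap_typeARep, permAct_swap, map_add, map_smul, hBD, hα, dotProduct_add,
    dotProduct_single, dotProduct_single, mul_one, mul_one]

lemma range_typeARep_eq_Tv (hB : ∀ v, B v v = 0)
    (hBD : ∀ x y, B x y = diffMap n x ⬝ᵥ diffMap n y) {S : Set (Fin n → ZMod 2)}
    (hbasis : ∀ i, Pi.single i 1 ∈ S)
    (hroots : ∀ α ∈ S, ∃ a b, diffMap n α = Pi.single a 1 + Pi.single b 1) :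
    (typeARep n).range = Tv B hB S := by
  apply le_antisymm
  · rw [MonoidHom.range_eq_map, ← Subgroup.closure_eq_top_of_mclosure_eq_top
      (Equiv.Perm.mclosure_swap_castSucc_succ n), MonoidHom.map_closure, Subgroup.closure_le]
    rintro _ ⟨_, ⟨i, rfl⟩, rfl⟩
    rw [typeARep_swap hB hBD (diffMap_single i)]
    exact Subgroup.subset_closure ⟨_, hbasis i, rfl⟩
  · rw [Tv, Subgroup.closure_le]
    rintro _ ⟨α, hα, rfl⟩
    obtain ⟨a, b, hab⟩ := hroots α hα
    exact ⟨Equiv.swap a b, typeARep_swap hB hBD hab⟩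

end Transvections

section Blocks

variable {α : Type} {G : SimpleGraph α}

lemma connected_of_forall_adj {x : α} (hx : ∀ v, v ≠ x → G.Adj x v) : G.Connected := by
  have hreach (v : α) : G.Reachable x v := by
    obtain rfl | hv := eq_or_ne v x
    · rfl
    · exact (hx v hv).reachable
  exact (SimpleGraph.connected_iff G).2 ⟨fun u v => (hreach u).symm.trans (hreach v), ⟨x⟩⟩

lemma numComponents_eq_one (h : G.Connected) : numComponents G = 1 :=
  have := h.preconnected.subsingleton_connectedComponent
  have : Nonempty G.ConnectedComponent := ⟨G.connectedComponentMk h.nonempty.some⟩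
  Nat.card_unique

lemma connected_deleteVert_of_forall_adj {u x : α} (hxu : x ≠ u)
    (hx : ∀ v, v ≠ x → G.Adj x v) : (G.induce {v | v ≠ u}).Connected :=
  connected_of_forall_adj (x := ⟨x, hxu⟩) fun v hv => hx v fun h => hv (Subtype.ext h)

lemma not_isCutVertex_of_adj_of_forall_adj {x y : α} (hxy : G.Adj x y)
    (hx : ∀ v, v ≠ x → G.Adj x v) (hy : ∀ v, v ≠ y → G.Adj y v) (u : α) :
    ¬ IsCutVertex G u := by
  have hdel : (G.induce {v | v ≠ u}).Connected := by
    obtain rfl | hxu := eq_or_ne x u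
    · exact connected_deleteVert_of_forall_adj hxy.ne' hy
    · exact connected_deleteVert_of_forall_adj hxu hx
  rw [IsCutVertex, numComponents_eq_one (connected_of_forall_adj hx), numComponents_eq_one hdel]
  exact lt_irrefl 1

lemma induce_connected_and_not_isCutVertex {A : Set α} {x y : α} (hx : x ∈ A) (hy : y ∈ A)
    (hxy : G.Adj x y) (hxA : ∀ v ∈ A, v ≠ x → G.Adj x v) (hyA : ∀ v ∈ A, v ≠ y → G.Adj y v) :
    (G.induce A).Connected ∧ ∀ u, ¬ IsCutVertex (G.induce A) u := by
  have hx' (v : A) (hv : v ≠ ⟨x, hx⟩) : (G.induce A).Adj ⟨x, hx⟩ v :=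
    hxA v v.2 fun h => hv (Subtype.ext h)
  have hy' (v : A) (hv : v ≠ ⟨y, hy⟩) : (G.induce A).Adj ⟨y, hy⟩ v :=
    hyA v v.2 fun h => hv (Subtype.ext h)
  exact ⟨connected_of_forall_adj hx', not_isCutVertex_of_adj_of_forall_adj
    (x := ⟨x, hx⟩) (y := ⟨y, hy⟩) hxy hx' hy'⟩

lemma IsBlockGraph.pairwise_adj [Finite α] (hG : IsBlockGraph G) {A : Set α}
    (hA : (G.induce A).Connected ∧ ∀ u, ¬ IsCutVertex (G.induce A) u) : A.Pairwise G.Adj := by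
  obtain ⟨A', ⟨hAA', hA'⟩, hmax⟩ := (Set.toFinite {A' : Set α | A ⊆ A' ∧
    (G.induce A').Connected ∧ ∀ u, ¬ IsCutVertex (G.induce A') u}).exists_maximalFor id _
    ⟨A, subset_rfl, hA⟩
  have hblock : IsBlock G A' :=
    ⟨hA', fun A'' hA'A'' hA'' => (hmax ⟨hAA'.trans hA'A'', hA''⟩ hA'A'').antisymm hA'A''⟩
  exact (hG.2 A' hblock).mono hAA'

lemma IsBlockGraph.adj_of_mem_commonNeighbors [Finite α] (hG : IsBlockGraph G) {x y u v : α}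
    (hxy : G.Adj x y) (hu : u ∈ G.commonNeighbors x y) (hv : v ∈ G.commonNeighbors x y)
    (huv : u ≠ v) : G.Adj u v := by
  obtain ⟨hxu, hyu⟩ := (SimpleGraph.mem_commonNeighbors G).1 hu
  obtain ⟨hxv, hyv⟩ := (SimpleGraph.mem_commonNeighbors G).1 hv
  refine hG.pairwise_adj (A := {x, y, u, v}) ?_ (by simp) (by simp) huv
  refine induce_connected_and_not_isCutVertex (x := x) (y := y) (by simp) (by simp) hxy ?_ ?_
  all_goals
    simp only [Set.mem_insert_iff, Set.mem_singleton_iff]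
    rintro w (rfl | rfl | rfl | rfl) hw
    all_goals first | exact absurd rfl hw | assumption | exact hxy.symm

end Blocks

/-- counterexample: for `n ≥ 3`, `V = 𝔽₂ⁿ`, `B` the symplectic form with
`B(αᵢ,αⱼ) = 1` iff `|i - j| = 1` on the standard basis, and `S` the standard basis together
with `α₁ + α₂`: `S` spans `V`, `Tv(S)` is isomorphic to a symmetric group, yet `G(S)` is
not a block graph. -/
theorem stmt7 (n : ℕ) (hn : 3 ≤ n)
    (B : LinearMap.BilinForm (ZMod 2) (Fin n → ZMod 2)) (hB : ∀ v, B v v = 0)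
    (hBval : ∀ i j : Fin n, B (Pi.single i 1) (Pi.single j 1) =
      if (i : ℕ) + 1 = (j : ℕ) ∨ (j : ℕ) + 1 = (i : ℕ) then 1 else 0)
    (S : Set (Fin n → ZMod 2))
    (hS : S = (Set.range fun i : Fin n => Pi.single i (1 : ZMod 2)) ∪
      {Pi.single (⟨0, by omega⟩ : Fin n) 1 + Pi.single (⟨1, by omega⟩ : Fin n) 1}) :
    Submodule.span (ZMod 2) S = ⊤ ∧
      (∃ m : ℕ, Nonempty (Tv B hB S ≃* Equiv.Perm (Fin m))) ∧
      ¬ IsBlockGraph (graphOf B hB S) := by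
  set i₀ : Fin n := ⟨0, by omega⟩
  set i₁ : Fin n := ⟨1, by omega⟩
  have hbasis (i : Fin n) : Pi.single i 1 ∈ S := hS ▸ Or.inl ⟨i, rfl⟩
  have hγ : Pi.single i₀ 1 + Pi.single i₁ 1 ∈ S := hS ▸ Or.inr rfl
  refine ⟨?_, ⟨n + 1, ⟨?_⟩⟩, ?_⟩
  · rw [eq_top_iff, ← (Pi.basisFun (ZMod 2) (Fin n)).span_eq]
    exact Submodule.span_mono (Set.range_subset_iff.2 fun i => by simpa using hbasis i)
  · have hroots (α) (hα : α ∈ S) : ∃ a b, diffMap n α = Pi.single a 1 + Pi.single b 1 := by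
      rw [hS] at hα
      obtain ⟨i, rfl⟩ | rfl := hα
      · exact ⟨_, _, diffMap_single i⟩
      · exact ⟨_, _, diffMap_single_add_single_of_succ_eq rfl⟩
    have hrange := range_typeARep_eq_Tv hB (bilinForm_eq_dotProduct_diffMap hBval) hbasis hroots
    exact (MulEquiv.subgroupCongr hrange).symm.trans
      (MonoidHom.ofInjective (typeARep_injective (by omega))).symm
  · set i₂ : Fin n := ⟨2, by omega⟩
    let a (i : Fin n) : S := ⟨_, hbasis i⟩
    have h02 : a i₀ ≠ a i₂ := fun h => by
      simpa [a, i₀, i₂, Pi.single_apply] using congrFun (congrArg Subtype.val h) i₀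
    intro hG
    refine absurd (hG.adj_of_mem_commonNeighbors (x := a i₁) (y := ⟨_, hγ⟩) ?_ ?_ ?_ h02) ?_
    all_goals simp [graphOf, SimpleGraph.mem_commonNeighbors, a, hBval, i₀, i₁, i₂]
end

section
/- Let V be a vector space over 𝔽₂ of finite positive dimension endowed with a symplectic form B whose radical is zero. Let I be a basis of V such that the graph G(I) is connected. Then for any k ≥ 2 mutually distinct vectors β₁,…,β_k ∈ V \ I, the graph G(I ∪ {β₁,…,β_k}) is not isomorphic to the line graph of a tree. -/
/-! Over `𝔽₂` the adjacency matrix of `G(S)` is the Gram matrix of `B` on `S`. When `S` spans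
`V` and `B` is nondegenerate its rank is `dim V`, so for `S = I ∪ {β₁, …, β_k}` its nullity
is `k`. On the other hand, the adjacency matrix of the line graph of a tree has nullity at most
one over `𝔽₂`: a kernel vector `x` has the same incidence sum `∑_{e ∋ v} x e` at every vertex
`v`, and on a forest the map from edge weights to incidence sums is injective. Hence `k ≤ 1`. -/

open Module

open Matrix

namespace SimpleGraph

variable {V : Type*} {G : SimpleGraph V}

theorem IsAcyclic.exists_existsUnique_adj [Finite G.edgeSet] (hG : G.IsAcyclic) (hne : G ≠ ⊥) :
    ∃ u, ∃! w, G.Adj u w := by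
  obtain ⟨a, b, hab⟩ := ne_bot_iff_exists_adj.mp hne
  have : Nonempty V := ⟨a⟩
  obtain ⟨u, v, p, hp, hmax⟩ := Walk.exists_isPath_forall_isPath_length_le_length G
  have hnil : ¬p.Nil := fun h => by
    simpa [Walk.length_eq_zero_iff.mpr h] using hmax a b hab.toWalk (by simp [hab.ne])
  refine ⟨u, p.snd, p.adj_snd hnil, fun w hadj => hG.eq_snd_of_adj_start hp hadj ?_⟩
  by_contra hw
  simpa using hmax _ _ (p.cons hadj.symm) (hp.cons hw)

theorem lineGraph_adj_mk_iff_xor {u v : V} (huv : G.Adj u v) (f : G.edgeSet) :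
    G.lineGraph.Adj ⟨s(u, v), huv⟩ f ↔ Xor (u ∈ (f : Sym2 V)) (v ∈ (f : Sym2 V)) := by
  obtain ⟨f, hf⟩ := f
  induction f using Sym2.ind with
  | _ a b =>
  have hab : a ≠ b := G.ne_of_adj hf
  have huv' : u ≠ v := G.ne_of_adj huv
  simp only [lineGraph_adj_iff_exists, ne_eq, Subtype.ext_iff, Sym2.mem_iff, or_and_right,
    exists_or, exists_eq_left, Sym2.eq_iff]
  grind

variable [DecidableEq V] [Fintype G.edgeSet] {R : Type*}

variable (G R) in
def incidenceMap [CommSemiring R] : (G.edgeSet → R) →ₗ[R] V → R where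
  toFun x v := ∑ e : G.edgeSet, if v ∈ (e : Sym2 V) then x e else 0
  map_add' x y := by
    ext v
    simp only [Pi.add_apply, ← Finset.sum_add_distrib, ← ite_add_zero]
  map_smul' c x := by
    ext v
    simp only [Pi.smul_apply, smul_eq_mul, RingHom.id_apply, Finset.mul_sum, mul_ite, mul_zero]

theorem incidenceMap_apply [CommSemiring R] (x : G.edgeSet → R) (v : V) :
    G.incidenceMap R x v = ∑ e : G.edgeSet, if v ∈ (e : Sym2 V) then x e else 0 :=
  rfl

theorem IsAcyclic.incidenceMap_injective [CommRing R] (hG : G.IsAcyclic) :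
    Function.Injective (G.incidenceMap R) := by
  rw [← LinearMap.ker_eq_bot, LinearMap.ker_eq_bot']
  intro x hx
  by_contra hne
  -- The edges of nonzero weight form a nonempty finite forest, and a leaf of it sees just one.
  let H : SimpleGraph V := fromEdgeSet {e | ∃ h : e ∈ G.edgeSet, x ⟨e, h⟩ ≠ 0}
  have hHG : H ≤ G := fun _ _ hab => hab.1.1
  have : Finite H.edgeSet := (Set.toFinite G.edgeSet).subset (edgeSet_mono hHG)
  have hH : H ≠ ⊥ := by
    obtain ⟨⟨e, he⟩, hxe⟩ := Function.ne_iff.mp hne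
    induction e using Sym2.ind with
    | _ a b => exact ne_bot_iff_exists_adj.mpr ⟨a, b, ⟨⟨he, hxe⟩, G.ne_of_adj he⟩⟩
  obtain ⟨u, w, ⟨⟨huw, hxuw⟩, -⟩, hunique⟩ := (hG.anti hHG).exists_existsUnique_adj hH
  have hu := congrFun hx u
  rw [incidenceMap_apply, Finset.sum_eq_single ⟨s(u, w), huw⟩] at hu
  · exact hxuw (by simpa using hu)
  · rintro ⟨f, hf⟩ - hfne
    split_ifs with huf
    · by_contra hxf
      obtain ⟨t, rfl⟩ := Sym2.mem_iff_exists.mp huf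
      obtain rfl := hunique t ⟨⟨hf, hxf⟩, G.ne_of_adj hf⟩
      exact hfne rfl
    · rfl
  · simp

theorem adjMatrix_lineGraph_mulVec_apply_mk [CommRing R] [CharP R 2]
    [DecidableRel G.lineGraph.Adj] (x : G.edgeSet → R) {u v : V} (huv : G.Adj u v) :
    (G.lineGraph.adjMatrix R *ᵥ x) ⟨s(u, v), huv⟩ =
      G.incidenceMap R x u + G.incidenceMap R x v := by
  simp only [Matrix.mulVec, dotProduct, adjMatrix_apply, incidenceMap_apply,
    ← Finset.sum_add_distrib, lineGraph_adj_mk_iff_xor]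
  refine Finset.sum_congr rfl fun f _ => ?_
  by_cases hu : u ∈ (f : Sym2 V) <;> by_cases hv : v ∈ (f : Sym2 V) <;>
    simp [hu, hv, CharTwo.add_self_eq_zero]

theorem incidenceMap_eq_of_reachable [CommRing R] [CharP R 2] [DecidableRel G.lineGraph.Adj]
    {x : G.edgeSet → R} (hx : G.lineGraph.adjMatrix R *ᵥ x = 0) {u v : V}
    (h : G.Reachable u v) : G.incidenceMap R x u = G.incidenceMap R x v := by
  obtain ⟨p⟩ := h
  induction p with
  | nil => rfl
  | cons huv _ ih =>
    rw [← ih, ← CharTwo.add_eq_zero, ← adjMatrix_lineGraph_mulVec_apply_mk x huv, hx,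
      Pi.zero_apply]

theorem IsTree.finrank_ker_adjMatrix_lineGraph_le_one [Field R] [CharP R 2]
    [DecidableRel G.lineGraph.Adj] (hG : G.IsTree) :
    finrank R (LinearMap.ker (G.lineGraph.adjMatrix R).mulVecLin) ≤ 1 := by
  obtain ⟨u₀⟩ := hG.connected.nonempty
  let L := LinearMap.proj u₀ ∘ₗ G.incidenceMap R ∘ₗ
    (LinearMap.ker (G.lineGraph.adjMatrix R).mulVecLin).subtype
  have hL : Function.Injective L := by
    rw [← LinearMap.ker_eq_bot, LinearMap.ker_eq_bot']
    rintro ⟨x, hx⟩ hLx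
    have hzero : G.incidenceMap R x = G.incidenceMap R 0 := by
      rw [map_zero]
      exact funext fun v =>
        (incidenceMap_eq_of_reachable (LinearMap.mem_ker.mp hx) (hG.connected v u₀)).trans hLx
    exact Subtype.ext (hG.isAcyclic.incidenceMap_injective hzero)
  simpa using LinearMap.finrank_le_finrank_of_injective hL

theorem IsTree.card_edgeSet_le_rank_adjMatrix_lineGraph_add_one [Field R] [CharP R 2]
    [DecidableRel G.lineGraph.Adj] (hG : G.IsTree) :
    Fintype.card G.edgeSet ≤ (G.lineGraph.adjMatrix R).rank + 1 := by
  have hrank := LinearMap.finrank_range_add_finrank_ker (G.lineGraph.adjMatrix R).mulVecLin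
  rw [Module.finrank_fintype_fun_eq_card] at hrank
  have hker := hG.finrank_ker_adjMatrix_lineGraph_le_one (R := R)
  rw [Matrix.rank]
  omega

end SimpleGraph

theorem Matrix.rank_of_bilinForm_eq_finrank {K V ι : Type*} [Field K] [AddCommGroup V]
    [Module K V] [Fintype ι] {B : LinearMap.BilinForm K V} (hB : B.SeparatingLeft) {v : ι → V}
    (hv : Submodule.span K (Set.range v) = ⊤) :
    (Matrix.of fun i j => B (v i) (v j)).rank = finrank K V := by
  let Φ : V →ₗ[K] ι → K := LinearMap.pi fun i => B.flip (v i)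
  have hΦ : Function.Injective Φ := by
    rw [← LinearMap.ker_eq_bot, LinearMap.ker_eq_bot']
    intro w hw
    refine hB w fun u => ?_
    have : B w = 0 := LinearMap.ext_on_range hv fun i => congrFun hw i
    simp [this]
  have hfactor : (Matrix.of fun i j => B (v i) (v j))ᵀ.mulVecLin =
      Φ ∘ₗ Fintype.linearCombination K v := by
    ext x i
    simp [Φ, Matrix.vecMul, dotProduct, Fintype.linearCombination_apply]
  rw [← Matrix.rank_transpose, Matrix.rank, hfactor, LinearMap.range_comp,
    Fintype.range_linearCombination, hv, Submodule.map_top, LinearMap.finrank_range_of_inj hΦ]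

theorem adjMatrix_graphOf {V : Type} [AddCommGroup V] [Module (ZMod 2) V]
    (B : LinearMap.BilinForm (ZMod 2) V) (hB : ∀ v, B v v = 0) (S : Set V)
    [DecidableRel (graphOf B hB S).Adj] :
    (graphOf B hB S).adjMatrix (ZMod 2) = Matrix.of fun s t : S => B s t := by
  ext s t
  rw [SimpleGraph.adjMatrix_apply, Matrix.of_apply]
  have hc : ∀ c : ZMod 2, c ≠ 1 → c = 0 := by decide
  split_ifs with h
  · exact Eq.symm h
  · exact (hc _ h).symm

theorem stmt8_general {V : Type} [AddCommGroup V] [Module (ZMod 2) V] [FiniteDimensional (ZMod 2) V]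
    (B : LinearMap.BilinForm (ZMod 2) V) (hB : ∀ v, B v v = 0)
    (hrad : ∀ v : V, (∀ w, B v w = 0) → v = 0)
    (I : Set V) (hI : LinearIndependent (ZMod 2) ((↑) : I → V))
    (hIspan : Submodule.span (ZMod 2) I = ⊤)
    (k : ℕ) (hk : 2 ≤ k) (β : Fin k → V) (hinj : Function.Injective β)
    (hβ : ∀ i, β i ∉ I) :
    ¬ IsLineGraphOfTree (graphOf B hB (I ∪ Set.range β)) := by
  classical
  rintro ⟨W, T, hT, ⟨e⟩⟩
  set S := I ∪ Set.range β
  have : Finite V := Module.finite_of_finite (ZMod 2)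
  have : Fintype S := Fintype.ofFinite S
  have : Fintype T.edgeSet := Fintype.ofEquiv S e.toEquiv
  have hspan : Submodule.span (ZMod 2) (Set.range ((↑) : S → V)) = ⊤ := by
    rw [Subtype.range_coe, eq_top_iff, ← hIspan]
    exact Submodule.span_mono Set.subset_union_left
  have hrank : ((graphOf B hB S).adjMatrix (ZMod 2)).rank = finrank (ZMod 2) V := by
    rw [adjMatrix_graphOf]
    exact Matrix.rank_of_bilinForm_eq_finrank hrad hspan
  have hcardI : I.ncard = finrank (ZMod 2) V := by
    rw [finrank_eq_nat_card_basis (Basis.mk hI (by rw [Subtype.range_coe, hIspan])),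
      Nat.card_coe_set_eq]
  have hcardS : Fintype.card S = finrank (ZMod 2) V + k := by
    rw [← Nat.card_eq_fintype_card, Nat.card_coe_set_eq,
      Set.ncard_union_eq (Set.disjoint_right.mpr (by rintro _ ⟨i, rfl⟩; exact hβ i)), hcardI,
      Set.ncard_range_of_injective hinj, Nat.card_fin]
  have hcard := hT.card_edgeSet_le_rank_adjMatrix_lineGraph_add_one (R := ZMod 2)
  rw [← Fintype.card_congr e.toEquiv, ← e.reindex_adjMatrix (ZMod 2), Matrix.rank_reindex,
    hrank, hcardS] at hcard
  omega

/-- If the radical of `V` is zero, `I` is a basis of `V` with `G(I)` connected,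
then for `k ≥ 2` mutually distinct vectors `β₁, …, β_k ∈ V \ I`, the graph
`G(I ∪ {β₁, …, β_k})` is not (isomorphic to) the line graph of a tree. -/
theorem stmt8 {V : Type} [AddCommGroup V] [Module (ZMod 2) V] [FiniteDimensional (ZMod 2) V]
    (hdim : 0 < Module.finrank (ZMod 2) V)
    (B : LinearMap.BilinForm (ZMod 2) V) (hB : ∀ v, B v v = 0)
    (hrad : ∀ v : V, (∀ w, B v w = 0) → v = 0)
    (I : Set V) (hI : LinearIndependent (ZMod 2) ((↑) : I → V))
    (hIspan : Submodule.span (ZMod 2) I = ⊤)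
    (hIconn : (graphOf B hB I).Connected)
    (k : ℕ) (hk : 2 ≤ k) (β : Fin k → V) (hinj : Function.Injective β)
    (hβ : ∀ i, β i ∉ I) :
    ¬ IsLineGraphOfTree (graphOf B hB (I ∪ Set.range β)) :=
  stmt8_general B hB hrad I hI hIspan k hk β hinj hβ
end

section
/- Let V be a vector space over 𝔽₂ of finite positive dimension endowed with a symplectic form B. Let I be a basis of V, let T be a tree, and suppose G(I) is the line graph of T via an identification of I with the edge set of T (so that for distinct α, α' ∈ I, B(α,α') = 1 iff the edges α and α' share a vertex of T). Then the following are equivalent: (i) the radical of V is zero; (ii) the dimension of V is even; (iii) for some vertex u of T there exists β ∈ V such that for all α ∈ I, B(α,β) = 1 iff u is incident to the edge α in T; (iv) for each vertex u of T there exists a unique β ∈ V such that for all α ∈ I, B(α,β) = 1 iff u is incident to the edge α in T. -/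
open Module

/-!
Send each basis vector `α` to the incidence vector `θ α ∈ 𝔽₂^W` of its edge `e α`. Every edge has
two ends and distinct edges of a tree share at most one vertex, so `B` is the pullback of the
standard dot product along `θ`. As `T` is a tree, `θ` is injective and its image is the space of
even-weight vectors; and a vector orthogonal to every edge vector is constant along edges, hence
is `0` or `1`. Condition (iii)/(iv) at `u` says exactly `θ β = 1 + Pi.single u 1`, a vector of
even weight iff `dim V = |W| - 1` is even, while a nonzero radical vector must satisfy `θ β = 1`,
which is possible iff `|W|` is even.
-/

open Matrix

namespace SimpleGraph

variable {W : Type*} {G : SimpleGraph W}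

theorem Preconnected.rel_of_adj {r : W → W → Prop} (hG : G.Preconnected) (hr : Equivalence r)
    (hadj : ∀ x y, G.Adj x y → r x y) (u v : W) : r u v := by
  obtain ⟨p⟩ := hG u v
  induction p with
  | nil => exact hr.refl _
  | cons h _ ih => exact hr.trans (hadj _ _ h) ih

theorem Preconnected.finite [Finite G.edgeSet] (hG : G.Preconnected) : Finite W := by
  classical
  cases subsingleton_or_nontrivial W
  · infer_instance
  · rw [← Set.finite_univ_iff, ← hG.support_eq_univ]
    refine ((Set.toFinite G.edgeSet).biUnion fun s _ => s.toFinset.finite_toSet).subset ?_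
    rintro v ⟨w, hvw⟩
    exact Set.mem_biUnion (G.mem_edgeSet.mpr hvw) (by simp)

theorem IsTree.finrank_add_one_eq_card {K V ι : Type*} [DivisionRing K] [AddCommGroup V]
    [Module K V] [Finite W] (hG : G.IsTree) (b : Basis ι K V) (e : ι ≃ G.edgeSet) :
    finrank K V + 1 = Nat.card W := by
  rw [Module.finrank_eq_nat_card_basis b, Nat.card_congr e]
  exact (isTree_iff_connected_and_card.mp hG).2

end SimpleGraph

theorem Submodule.mem_of_sum_eq_zero {R W : Type*} [CommRing R] [Fintype W] [DecidableEq W]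
    {P : Submodule R (W → R)} (hP : ∀ u v, Pi.single u 1 - Pi.single v 1 ∈ P) {f : W → R}
    (hf : ∑ u, f u = 0) : f ∈ P := by
  cases isEmpty_or_nonempty W
  · simp [Subsingleton.elim f 0]
  obtain ⟨x₀⟩ := ‹Nonempty W›
  have hf' : f = ∑ u, f u • (Pi.single u 1 - Pi.single x₀ 1) := by
    simp only [smul_sub, Finset.sum_sub_distrib, ← Finset.sum_smul, hf, zero_smul, sub_zero]
    simpa [← Pi.single_smul] using (Finset.univ_sum_single f).symm
  rw [hf']
  exact P.sum_mem fun u _ => P.smul_mem _ (hP u x₀)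

section EdgeVec

variable {W : Type*} [DecidableEq W]

def edgeVec (s : Sym2 W) : W → ZMod 2 := fun w => if w ∈ s then 1 else 0

theorem edgeVec_mk {x y : W} (hxy : x ≠ y) :
    edgeVec s(x, y) = Pi.single x 1 + Pi.single y 1 := by
  ext w
  by_cases hwx : w = x <;> by_cases hwy : w = y <;> simp_all [edgeVec]

variable [Fintype W]

theorem edgeVec_mk_dotProduct {x y : W} (hxy : x ≠ y) (f : W → ZMod 2) :
    edgeVec s(x, y) ⬝ᵥ f = f x + f y := by
  simp [edgeVec_mk hxy, add_dotProduct, single_dotProduct]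

theorem edgeVec_dotProduct_one {s : Sym2 W} (hs : ¬ s.IsDiag) : edgeVec s ⬝ᵥ 1 = 0 := by
  induction s using Sym2.ind with
  | _ x y => rw [edgeVec_mk_dotProduct (by simpa using hs)]; rfl

theorem edgeVec_dotProduct_self {s : Sym2 W} (hs : ¬ s.IsDiag) :
    edgeVec s ⬝ᵥ edgeVec s = 0 := by
  induction s using Sym2.ind with
  | _ x y => simp [edgeVec_mk_dotProduct (show x ≠ y by simpa using hs), edgeVec]; decide

theorem edgeVec_dotProduct_eq_one_iff {s t : Sym2 W} (hs : ¬ s.IsDiag) (hst : s ≠ t) :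
    edgeVec s ⬝ᵥ edgeVec t = 1 ↔ ∃ u, u ∈ s ∧ u ∈ t := by
  induction s using Sym2.ind with
  | _ x y =>
    have hxy : x ≠ y := by simpa using hs
    have hnot_both : ¬ (x ∈ t ∧ y ∈ t) := fun h => hst ((Sym2.mem_and_mem_iff hxy).mp h).symm
    rw [edgeVec_mk_dotProduct hxy]
    by_cases hx : x ∈ t <;> by_cases hy : y ∈ t <;> simp_all [edgeVec]

end EdgeVec

theorem ZMod.eq_of_eq_one_iff {a c : ZMod 2} (h : a = 1 ↔ c = 1) : a = c := by
  revert a c; decide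

section IncidenceMap

variable {V W ι : Type*} [AddCommGroup V] [Module (ZMod 2) V] [DecidableEq W]
  {T : SimpleGraph W} (b : Basis ι (ZMod 2) V) (e : ι ≃ T.edgeSet)

noncomputable def incidenceMap : V →ₗ[ZMod 2] W → ZMod 2 :=
  b.constr (ZMod 2) fun i => edgeVec (e i : Sym2 W)

theorem incidenceMap_basis (i : ι) : incidenceMap b e (b i) = edgeVec (e i : Sym2 W) :=
  b.constr_basis _ _ _

theorem single_sub_single_mem_range (hT : T.Preconnected) (u v : W) :
    Pi.single u 1 - Pi.single v 1 ∈ LinearMap.range (incidenceMap b e) := by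
  refine hT.rel_of_adj (r := fun u v : W =>
      (Pi.single u 1 - Pi.single v 1 : W → ZMod 2) ∈ LinearMap.range (incidenceMap b e))
    ⟨fun _ => by simp, fun h => by simpa using neg_mem h,
      fun h h' => by simpa using add_mem h h'⟩ (fun x y h => ?_) u v
  refine ⟨b (e.symm ⟨s(x, y), h⟩), ?_⟩
  rw [incidenceMap_basis, Equiv.apply_symm_apply, edgeVec_mk h.ne, sub_eq_add_neg,
    ← Pi.single_neg]
  rfl

variable [Fintype W]

theorem incidenceMap_basis_dotProduct_of_adj {x y : W} (h : T.Adj x y) (f : W → ZMod 2) :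
    incidenceMap b e (b (e.symm ⟨s(x, y), h⟩)) ⬝ᵥ f = f x + f y := by
  rw [incidenceMap_basis, Equiv.apply_symm_apply, edgeVec_mk_dotProduct h.ne]

theorem incidenceMap_dotProduct_one (v : V) : incidenceMap b e v ⬝ᵥ 1 = 0 := by
  suffices (dotProductBilin (ZMod 2) (ZMod 2)).flip 1 ∘ₗ incidenceMap b e = 0 from
    LinearMap.congr_fun this v
  refine b.ext fun i => ?_
  simp [incidenceMap_basis, edgeVec_dotProduct_one (T.not_isDiag_of_mem_edgeSet (e i).2)]

theorem bilin_eq_incidenceMap_dotProduct {B : LinearMap.BilinForm (ZMod 2) V}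
    (hB : ∀ v, B v v = 0)
    (he : ∀ i j, i ≠ j → (B (b i) (b j) = 1 ↔ ∃ u, u ∈ (e i : Sym2 W) ∧ u ∈ (e j : Sym2 W)))
    (v w : V) : B v w = incidenceMap b e v ⬝ᵥ incidenceMap b e w := by
  suffices B = (dotProductBilin (ZMod 2) (ZMod 2)).compl₁₂ (incidenceMap b e) (incidenceMap b e)
    by rw [this]; rfl
  refine LinearMap.BilinForm.ext_basis b fun i j => ?_
  simp only [LinearMap.compl₁₂_apply, dotProductBilin_apply_apply, incidenceMap_basis]
  obtain rfl | hij := eq_or_ne i j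
  · rw [hB, edgeVec_dotProduct_self (T.not_isDiag_of_mem_edgeSet (e i).2)]
  · have hij' : (e i : Sym2 W) ≠ e j := fun h => hij (e.injective (Subtype.ext h))
    exact ZMod.eq_of_eq_one_iff ((he i j hij).trans
      (edgeVec_dotProduct_eq_one_iff (T.not_isDiag_of_mem_edgeSet (e i).2) hij').symm)

theorem eq_zero_or_eq_one_of_forall_dotProduct_eq_zero (hT : T.Connected) {g : W → ZMod 2}
    (hg : ∀ i, incidenceMap b e (b i) ⬝ᵥ g = 0) : g = 0 ∨ g = 1 := by
  have hconst : ∀ x y, g x = g y := hT.preconnected.rel_of_adj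
    ⟨fun _ => rfl, Eq.symm, Eq.trans⟩ fun x y h =>
      CharTwo.add_eq_zero.mp (incidenceMap_basis_dotProduct_of_adj b e h g ▸ hg _)
  obtain ⟨x₀⟩ := hT.nonempty
  have hcases : g x₀ = 0 ∨ g x₀ = 1 := by generalize g x₀ = c; revert c; decide
  refine hcases.imp (fun h => ?_) fun h => ?_ <;> ext x <;> simp [hconst x x₀, h]

theorem mem_range_incidenceMap_iff (hT : T.Preconnected) {f : W → ZMod 2} :
    f ∈ LinearMap.range (incidenceMap b e) ↔ f ⬝ᵥ 1 = 0 := by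
  refine ⟨?_, fun hf => Submodule.mem_of_sum_eq_zero (single_sub_single_mem_range b e hT) ?_⟩
  · rintro ⟨v, rfl⟩
    exact incidenceMap_dotProduct_one b e v
  · rwa [← dotProduct_one]

theorem incidenceMap_injective [FiniteDimensional (ZMod 2) V] (hT : T.IsTree) :
    Function.Injective (incidenceMap b e) := by
  set σ := (dotProductBilin (ZMod 2) (ZMod 2)).flip (1 : W → ZMod 2)
  have hσ : σ ≠ 0 := by
    obtain ⟨x⟩ := hT.connected.nonempty
    intro h
    simpa [σ] using LinearMap.congr_fun h (Pi.single x 1)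
  have hrange : LinearMap.range (incidenceMap b e) = LinearMap.ker σ := by
    ext f
    exact mem_range_incidenceMap_iff b e hT.connected.preconnected
  have hcard := Nat.card_eq_fintype_card (α := W) ▸ hT.finrank_add_one_eq_card b e
  have hker := Module.Dual.finrank_ker_add_one_of_ne_zero hσ
  have hrank := (incidenceMap b e).finrank_range_add_finrank_ker
  rw [Module.finrank_fintype_fun_eq_card, ← hcard] at hker
  rw [hrange] at hrank
  rw [← LinearMap.ker_eq_bot, ← Submodule.finrank_eq_zero]
  omega

end IncidenceMap

section Tfae

variable {V W ι : Type*} [AddCommGroup V] [Module (ZMod 2) V] [Fintype W] {T : SimpleGraph W}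

theorem one_dotProduct_one_eq_finrank_add_one (hT : T.IsTree) (b : Basis ι (ZMod 2) V)
    (e : ι ≃ T.edgeSet) : (1 : W → ZMod 2) ⬝ᵥ 1 = finrank (ZMod 2) V + 1 := by
  rw [one_dotProduct_one, ← Nat.card_eq_fintype_card, ← hT.finrank_add_one_eq_card b e]
  push_cast; rfl

variable [DecidableEq W] (b : Basis ι (ZMod 2) V) (e : ι ≃ T.edgeSet)
  {B : LinearMap.BilinForm (ZMod 2) V}

theorem incidenceMap_eq_iff (hT : T.IsTree) (hB : ∀ v, B v v = 0)
    (he : ∀ i j, i ≠ j → (B (b i) (b j) = 1 ↔ ∃ u, u ∈ (e i : Sym2 W) ∧ u ∈ (e j : Sym2 W)))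
    (u : W) (β : V) :
    incidenceMap b e β = 1 + Pi.single u 1 ↔ ∀ i, (B (b i) β = 1 ↔ u ∈ (e i : Sym2 W)) := by
  have hBθ := bilin_eq_incidenceMap_dotProduct b e hB he
  have hθu : ∀ i, incidenceMap b e (b i) ⬝ᵥ Pi.single u 1 = 1 ↔ u ∈ (e i : Sym2 W) := by
    simp [incidenceMap_basis, edgeVec]
  constructor
  · intro hβ i
    rw [hBθ, hβ, dotProduct_add, incidenceMap_dotProduct_one, zero_add, hθu]
  · intro hβ
    set g := incidenceMap b e β + Pi.single u 1
    have hg : ∀ i, incidenceMap b e (b i) ⬝ᵥ g = 0 := fun i => by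
      rw [dotProduct_add, ← hBθ, ZMod.eq_of_eq_one_iff ((hβ i).trans (hθu i).symm)]
      exact CharTwo.add_self_eq_zero _
    have hg1 : g ⬝ᵥ 1 = 1 := by
      simp [g, add_dotProduct, incidenceMap_dotProduct_one, single_dotProduct]
    obtain hg0 | hg1' := eq_zero_or_eq_one_of_forall_dotProduct_eq_zero b e hT.connected hg
    · simp [hg0] at hg1
    · have : Nonempty W := hT.connected.nonempty
      exact CharTwo.add_eq_iff_eq_add.mp hg1'

theorem exists_incidenceMap_eq_iff_even [FiniteDimensional (ZMod 2) V] (hT : T.IsTree) (u : W) :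
    (∃ β, incidenceMap b e β = 1 + Pi.single u 1) ↔ Even (finrank (ZMod 2) V) := by
  rw [← LinearMap.mem_range, mem_range_incidenceMap_iff b e hT.connected.preconnected,
    add_dotProduct, one_dotProduct_one_eq_finrank_add_one hT b e, single_dotProduct,
    ← ZMod.natCast_eq_zero_iff_even]
  simp [add_assoc, CharTwo.add_self_eq_zero]

theorem forall_radical_eq_zero_iff_even [FiniteDimensional (ZMod 2) V] (hT : T.IsTree)
    (hB : ∀ v, B v v = 0)
    (he : ∀ i j, i ≠ j → (B (b i) (b j) = 1 ↔ ∃ u, u ∈ (e i : Sym2 W) ∧ u ∈ (e j : Sym2 W))) :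
    (∀ v, (∀ w, B v w = 0) → v = 0) ↔ Even (finrank (ZMod 2) V) := by
  have hBθ := bilin_eq_incidenceMap_dotProduct b e hB he
  have : Nonempty W := hT.connected.nonempty
  constructor
  · intro hrad
    by_contra hodd
    obtain ⟨v, hv⟩ : (1 : W → ZMod 2) ∈ LinearMap.range (incidenceMap b e) := by
      rw [mem_range_incidenceMap_iff b e hT.connected.preconnected,
        one_dotProduct_one_eq_finrank_add_one hT b e,
        ZMod.natCast_eq_one_iff_odd.mpr (Nat.not_even_iff_odd.mp hodd)]
      rfl
    have hv0 : v = 0 := hrad v fun w => by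
      rw [hBθ, hv, dotProduct_comm, incidenceMap_dotProduct_one]
    simp [hv0] at hv
  · intro heven v hv
    have hg : ∀ i, incidenceMap b e (b i) ⬝ᵥ incidenceMap b e v = 0 := fun i => by
      rw [dotProduct_comm, ← hBθ, hv]
    obtain h0 | h1 := eq_zero_or_eq_one_of_forall_dotProduct_eq_zero b e hT.connected hg
    · exact incidenceMap_injective b e hT (by rw [h0, map_zero])
    · have := incidenceMap_dotProduct_one b e v
      rw [h1, one_dotProduct_one_eq_finrank_add_one hT b e,
        ZMod.natCast_eq_zero_iff_even.mpr heven] at this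
      exact absurd this one_ne_zero

end Tfae

theorem tfae_of_edge_basis {V W ι : Type*} [AddCommGroup V] [Module (ZMod 2) V]
    [FiniteDimensional (ZMod 2) V] {T : SimpleGraph W} (hT : T.IsTree)
    (b : Basis ι (ZMod 2) V) (e : ι ≃ T.edgeSet) {B : LinearMap.BilinForm (ZMod 2) V}
    (hB : ∀ v, B v v = 0)
    (he : ∀ i j, i ≠ j → (B (b i) (b j) = 1 ↔ ∃ u, u ∈ (e i : Sym2 W) ∧ u ∈ (e j : Sym2 W))) :
    List.TFAE
      [∀ v, (∀ w, B v w = 0) → v = 0,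
       Even (finrank (ZMod 2) V),
       ∃ (u : W) (β : V), ∀ i, (B (b i) β = 1 ↔ u ∈ (e i : Sym2 W)),
       ∀ u : W, ∃! β : V, ∀ i, (B (b i) β = 1 ↔ u ∈ (e i : Sym2 W))] := by
  classical
  have : Finite ι := Module.Finite.finite_basis b
  have : Finite T.edgeSet := .of_equiv ι e
  have : Fintype W := have := hT.connected.preconnected.finite; .ofFinite W
  have hβ := incidenceMap_eq_iff b e hT hB he
  tfae_have 1 ↔ 2 := forall_radical_eq_zero_iff_even b e hT hB he
  tfae_have 3 → 2 := fun ⟨u, β, h⟩ =>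
    (exists_incidenceMap_eq_iff_even b e hT u).mp ⟨β, (hβ u β).mpr h⟩
  tfae_have 2 → 4 := fun heven u => by
    obtain ⟨β, hθβ⟩ := (exists_incidenceMap_eq_iff_even b e hT u).mpr heven
    refine ⟨β, (hβ u β).mp hθβ, fun β' h => incidenceMap_injective b e hT ?_⟩
    rw [(hβ u β').mpr h, hθβ]
  tfae_have 4 → 3 := fun h => by
    obtain ⟨u⟩ := hT.connected.nonempty
    exact ⟨u, (h u).exists⟩
  tfae_finish

theorem stmt9_general {V W : Type} [AddCommGroup V] [Module (ZMod 2) V] [FiniteDimensional (ZMod 2) V]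
    (B : LinearMap.BilinForm (ZMod 2) V) (hB : ∀ v, B v v = 0)
    (I : Set V) (hI : LinearIndependent (ZMod 2) ((↑) : I → V))
    (hIspan : Submodule.span (ZMod 2) I = ⊤)
    (T : SimpleGraph W) (hT : T.IsTree)
    (e : I ≃ T.edgeSet)
    (he : ∀ a b : I, a ≠ b →
      ((B (a : V) (b : V) = 1) ↔ ∃ u : W, u ∈ (e a : Sym2 W) ∧ u ∈ (e b : Sym2 W))) :
    List.TFAE
      [∀ v : V, (∀ w, B v w = 0) → v = 0,
       Even (Module.finrank (ZMod 2) V),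
       ∃ (u : W) (β : V), ∀ α : I, (B (α : V) β = 1 ↔ u ∈ (e α : Sym2 W)),
       ∀ u : W, ∃! β : V, ∀ α : I, (B (α : V) β = 1 ↔ u ∈ (e α : Sym2 W))] := by
  let b := Basis.mk hI (by rw [Subtype.range_coe, hIspan])
  have hb : ⇑b = (↑) := Basis.coe_mk _ _
  simpa only [hb] using tfae_of_edge_basis hT b e hB (by simpa only [hb] using he)

/-- with `I` a basis of `V` and `G(I)` the line graph of a tree `T` via an
identification `e` of `I` with the edges of `T`, the following are equivalent:
(i) the radical of `V` is zero; (ii) `dim V` is even; (iii) for some vertex `u` of `T` there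
is `β ∈ V` with `B α β = 1` iff `u` is incident to `α`, for all `α ∈ I`; (iv) for each
vertex `u` of `T` there is a unique such `β`. -/
theorem stmt9 {V W : Type} [AddCommGroup V] [Module (ZMod 2) V] [FiniteDimensional (ZMod 2) V]
    (hdim : 0 < Module.finrank (ZMod 2) V)
    (B : LinearMap.BilinForm (ZMod 2) V) (hB : ∀ v, B v v = 0)
    (I : Set V) (hI : LinearIndependent (ZMod 2) ((↑) : I → V))
    (hIspan : Submodule.span (ZMod 2) I = ⊤)
    (T : SimpleGraph W) (hT : T.IsTree)
    (e : I ≃ T.edgeSet)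
    (he : ∀ a b : I, a ≠ b →
      ((B (a : V) (b : V) = 1) ↔ ∃ u : W, u ∈ (e a : Sym2 W) ∧ u ∈ (e b : Sym2 W))) :
    List.TFAE
      [∀ v : V, (∀ w, B v w = 0) → v = 0,
       Even (Module.finrank (ZMod 2) V),
       ∃ (u : W) (β : V), ∀ α : I, (B (α : V) β = 1 ↔ u ∈ (e α : Sym2 W)),
       ∀ u : W, ∃! β : V, ∀ α : I, (B (α : V) β = 1 ↔ u ∈ (e α : Sym2 W))] :=
  stmt9_general B hB I hI hIspan T hT e he
end

section
/- Let V be a vector space over 𝔽₂ of finite positive dimension endowed with a symplectic form B whose radical is zero, of even dimension 2m ≥ 2. Let I be a basis of V such that G(I) is the line graph of a tree T (via an identification of I with the edges of T), let u be a vertex of T, and let β be the unique vector of V such that for all α ∈ I, B(α,β) = 1 iff u is incident to the edge α in T. Set S = I ∪ {β}, and suppose S is linearly dependent. Let Υ be the tree obtained from T by adding a new pendant edge incident to u, identified with β. Then G(S) is the line graph of Υ. -/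
open Module

/-- The tree obtained from `T` by adding a new pendant edge incident to `u`
(the new leaf is `Sum.inr ()`). -/
def addPendant {W : Type} (T : SimpleGraph W) (u : W) : SimpleGraph (W ⊕ Unit) :=
  SimpleGraph.fromRel fun a b =>
    (∃ x y : W, T.Adj x y ∧ a = Sum.inl x ∧ b = Sum.inl y) ∨
      (a = Sum.inl u ∧ b = Sum.inr ())

/-! Since `I` is independent and `S = I ∪ {β}` is not, `β ∉ I`, so `G(S)` is `G(I)` with the
single new vertex `β`. Matching `β` with the pendant edge of `Υ`, adjacency among the vectors of
`I` is adjacency in the line graph of `T`, and `β` is adjacent exactly to the edges at `u`,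
which are the edges of `Υ` meeting the pendant edge. -/

open SimpleGraph

section AddPendant

variable {W : Type} (T : SimpleGraph W) (u : W)

lemma addPendant_adj_inl_inl {x y : W} :
    (addPendant T u).Adj (Sum.inl x) (Sum.inl y) ↔ T.Adj x y := by
  simpa [addPendant, T.adj_comm y x] using fun h : T.Adj x y => h.ne

lemma addPendant_adj_inl_inr {x : W} :
    (addPendant T u).Adj (Sum.inl x) (Sum.inr ()) ↔ x = u := by
  simp [addPendant]

lemma addPendant_not_adj_inr_inr : ¬ (addPendant T u).Adj (Sum.inr ()) (Sum.inr ()) :=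
  (addPendant T u).irrefl

def addPendantEmbedding : T ↪g addPendant T u where
  toEmbedding := Function.Embedding.inl
  map_rel_iff' := addPendant_adj_inl_inl T u

lemma pendant_mem_edgeSet_addPendant : s(Sum.inl u, Sum.inr ()) ∈ (addPendant T u).edgeSet :=
  (addPendant_adj_inl_inr T u).mpr rfl

lemma exists_eq_map_inl_of_mem_edgeSet_addPendant {z : Sym2 (W ⊕ Unit)}
    (hz : z ∈ (addPendant T u).edgeSet) (hzu : z ≠ s(Sum.inl u, Sum.inr ())) :
    ∃ w ∈ T.edgeSet, z = w.map Sum.inl := by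
  induction z using Sym2.ind with
  | _ a b =>
    rcases a with x | _ <;> rcases b with y | _
    · exact ⟨s(x, y), (addPendant_adj_inl_inl T u).mp hz, rfl⟩
    · exact (hzu (by rw [(addPendant_adj_inl_inr T u).mp hz])).elim
    · exact (hzu (by rw [(addPendant_adj_inl_inr T u).mp ((addPendant T u).adj_symm hz),
        Sym2.eq_swap])).elim
    · exact (addPendant_not_adj_inr_inr T u hz).elim

lemma map_inl_ne_pendant (w : Sym2 W) : w.map Sum.inl ≠ s(Sum.inl u, Sum.inr ()) := fun h => by
  simpa using congrArg (Sum.inr () ∈ ·) h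

noncomputable def addPendantEdgeEquiv : T.edgeSet ⊕ Unit ≃ (addPendant T u).edgeSet :=
  Equiv.ofBijective
    (Sum.elim (addPendantEmbedding T u).toCopy.toLineGraphEmbedding
      fun _ => ⟨_, pendant_mem_edgeSet_addPendant T u⟩) <| by
    refine ⟨(RelEmbedding.injective _).sumElim (fun _ _ _ => rfl) fun w _ h =>
      map_inl_ne_pendant u w.1 (congrArg Subtype.val h), ?_⟩
    rintro ⟨z, hz⟩
    by_cases hzu : z = s(Sum.inl u, Sum.inr ())
    · exact ⟨Sum.inr (), Subtype.ext hzu.symm⟩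
    · obtain ⟨w, hw, rfl⟩ := exists_eq_map_inl_of_mem_edgeSet_addPendant T u hz hzu
      exact ⟨Sum.inl ⟨w, hw⟩, rfl⟩

@[simp]
lemma coe_addPendantEdgeEquiv_inl (w : T.edgeSet) :
    (addPendantEdgeEquiv T u (.inl w) : Sym2 (W ⊕ Unit)) = w.1.map Sum.inl :=
  rfl

@[simp]
lemma coe_addPendantEdgeEquiv_inr :
    (addPendantEdgeEquiv T u (.inr ()) : Sym2 (W ⊕ Unit)) = s(Sum.inl u, Sum.inr ()) :=
  rfl

lemma lineGraph_addPendant_adj_inl_inl {w w' : T.edgeSet} :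
    (addPendant T u).lineGraph.Adj (addPendantEdgeEquiv T u (.inl w))
      (addPendantEdgeEquiv T u (.inl w')) ↔ T.lineGraph.Adj w w' :=
  (addPendantEmbedding T u).toCopy.toLineGraphEmbedding.map_rel_iff

lemma lineGraph_addPendant_adj_inl_inr {w : T.edgeSet} :
    (addPendant T u).lineGraph.Adj (addPendantEdgeEquiv T u (.inl w))
      (addPendantEdgeEquiv T u (.inr ())) ↔ u ∈ (w : Sym2 W) := by
  rw [lineGraph_adj_iff_exists,
    and_iff_right ((addPendantEdgeEquiv T u).injective.ne Sum.inl_ne_inr)]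
  simp

end AddPendant

lemma apply_comm_of_isAlt_of_charTwo {R M : Type*} [CommRing R] [CharP R 2] [AddCommGroup M]
    [Module R M] {B : LinearMap.BilinForm R M} (hB : B.IsAlt) (x y : M) : B x y = B y x := by
  rw [← LinearMap.IsAlt.neg hB, CharTwo.neg_eq]

section GraphOf

variable {V : Type} [AddCommGroup V] [Module (ZMod 2) V] {B : LinearMap.BilinForm (ZMod 2) V}

lemma graphOf_adj (hB : ∀ v, B v v = 0) {S : Set V} {a b : S} :
    (graphOf B hB S).Adj a b ↔ B a b = 1 :=
  Iff.rfl

variable {W : Type} {T : SimpleGraph W} {I : Set V}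

lemma lineGraph_adj_iff_of_forall_ne (hB : ∀ v, B v v = 0) (e : I ≃ T.edgeSet)
    (he : ∀ a b : I, a ≠ b →
      ((B (a : V) (b : V) = 1) ↔ ∃ u : W, u ∈ (e a : Sym2 W) ∧ u ∈ (e b : Sym2 W)))
    (a b : I) : T.lineGraph.Adj (e a) (e b) ↔ B a b = 1 := by
  by_cases hab : a = b
  · subst hab
    simp [hB]
  · rw [lineGraph_adj_iff_exists, he a b hab]
    exact and_iff_right (e.injective.ne hab)

open scoped Classical in
noncomputable def graphOfInsertIso (hB : ∀ v, B v v = 0) (e : I ≃ T.edgeSet)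
    (he : ∀ a b : I, a ≠ b →
      ((B (a : V) (b : V) = 1) ↔ ∃ u : W, u ∈ (e a : Sym2 W) ∧ u ∈ (e b : Sym2 W)))
    {u : W} {β : V} (hβ : ∀ α : I, (B (α : V) β = 1 ↔ u ∈ (e α : Sym2 W))) (hβI : β ∉ I) :
    graphOf B hB (insert β I) ≃g (addPendant T u).lineGraph where
  toEquiv := (Equiv.Set.insert hβI).trans
    ((e.sumCongr (Equiv.refl Unit)).trans (addPendantEdgeEquiv T u))
  map_rel_iff' {x y} := by
    obtain ⟨p, rfl⟩ := (Equiv.Set.insert hβI).symm.surjective x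
    obtain ⟨q, rfl⟩ := (Equiv.Set.insert hβI).symm.surjective y
    simp only [Equiv.trans_apply, Equiv.apply_symm_apply, Equiv.sumCongr_apply, graphOf_adj]
    rcases p with a | ⟨⟨⟩⟩ <;> rcases q with b | ⟨⟨⟩⟩ <;>
      simp only [Sum.map_inl, Sum.map_inr, Equiv.refl_apply, Equiv.Set.insert_symm_apply_inl,
        Equiv.Set.insert_symm_apply_inr]
    · rw [lineGraph_addPendant_adj_inl_inl, lineGraph_adj_iff_of_forall_ne hB e he]
    · rw [lineGraph_addPendant_adj_inl_inr, hβ]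
    · rw [adj_comm, lineGraph_addPendant_adj_inl_inr, apply_comm_of_isAlt_of_charTwo hB, hβ]
    · exact iff_of_false (lineGraph _).irrefl (by simp [hB])

end GraphOf

theorem stmt16_general {V W : Type} [AddCommGroup V] [Module (ZMod 2) V]
    (B : LinearMap.BilinForm (ZMod 2) V) (hB : ∀ v, B v v = 0)
    (I : Set V) (hI : LinearIndependent (ZMod 2) ((↑) : I → V))
    (T : SimpleGraph W)
    (e : I ≃ T.edgeSet)
    (he : ∀ a b : I, a ≠ b →
      ((B (a : V) (b : V) = 1) ↔ ∃ u : W, u ∈ (e a : Sym2 W) ∧ u ∈ (e b : Sym2 W)))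
    (u : W) (β : V)
    (hβ : ∀ α : I, (B (α : V) β = 1 ↔ u ∈ (e α : Sym2 W)))
    (S : Set V) (hS : S = insert β I)
    (hdep : ¬ LinearIndependent (ZMod 2) ((↑) : S → V)) :
    Nonempty (graphOf B hB S ≃g (addPendant T u).lineGraph) := by
  subst hS
  have hβI : β ∉ I := fun hmem => hdep (by rwa [Set.insert_eq_of_mem hmem])
  exact ⟨graphOfInsertIso hB e he hβ hβI⟩

/-- radical zero, `dim V = 2m ≥ 2`, `I` a basis with `G(I)` the line graph
of a tree `T` via `e`, `u` a vertex of `T`, `β` the vector dual to `u`; if `S = I ∪ {β}` is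
linearly dependent, then `G(S)` is the line graph of the tree `Υ` obtained from `T` by
adding a pendant edge at `u` (identified with `β`). -/
theorem stmt16 {V W : Type} [AddCommGroup V] [Module (ZMod 2) V] [FiniteDimensional (ZMod 2) V]
    (B : LinearMap.BilinForm (ZMod 2) V) (hB : ∀ v, B v v = 0)
    (hrad : ∀ v : V, (∀ w, B v w = 0) → v = 0)
    (m : ℕ) (hm : 1 ≤ m) (hdim : Module.finrank (ZMod 2) V = 2 * m)
    (I : Set V) (hI : LinearIndependent (ZMod 2) ((↑) : I → V))
    (hIspan : Submodule.span (ZMod 2) I = ⊤)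
    (T : SimpleGraph W) (hT : T.IsTree)
    (e : I ≃ T.edgeSet)
    (he : ∀ a b : I, a ≠ b →
      ((B (a : V) (b : V) = 1) ↔ ∃ u : W, u ∈ (e a : Sym2 W) ∧ u ∈ (e b : Sym2 W)))
    (u : W) (β : V)
    (hβ : ∀ α : I, (B (α : V) β = 1 ↔ u ∈ (e α : Sym2 W)))
    (S : Set V) (hS : S = insert β I)
    (hdep : ¬ LinearIndependent (ZMod 2) ((↑) : S → V)) :
    Nonempty (graphOf B hB S ≃g (addPendant T u).lineGraph) :=
  stmt16_general B hB I hI T e he u β hβ S hS hdep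
end
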